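/- arXiv:2304.10803 — 2 statements merged into one kernel-verified Lean document; each statement's English description precedes it below -/
import Mathlib

section
/- For functions f1, f2, f3 with weights λ1, λ2, λ3, the Rankin–Cohen brackets satisfy λ3·[[f1,f2]_1, f3]_0 + λ1·[[f2,f3]_1, f1]_0 + λ2·[[f3,f1]_1, f2]_0 = 0. -/
open Polynomial Finset

/-- Generalized binomial coefficient `C(a, m) = (a-m+1)_m / m!`. -/
noncomputable def gbinom (a : ℂ) (m : ℕ) : ℂ :=
  (ascPochhammer ℂ m).eval (a - m + 1) / m.factorial

/-- The Rankin–Cohen bracket of weights `l1, l2` and degree `n`, on polynomials. -/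
noncomputable def RC (l1 l2 : ℂ) (n : ℕ) (f g : Polynomial ℂ) : Polynomial ℂ :=
  ∑ s ∈ Finset.range (n + 1),
    ((-1 : ℂ) ^ s * gbinom (l1 + n - 1) (n - s) * gbinom (l2 + n - 1) s) •
      (derivative^[s] f * derivative^[n - s] g)

/-!
Since `[f, g]_0 = f g` and `[f, g]_1 = λ₁ f g' - λ₂ f' g`, the left side expands into six
monomials `± λᵢ λⱼ fᵢ fⱼ' fₖ`, which cancel in pairs.
-/

@[simp]
lemma gbinom_zero (a : ℂ) : gbinom a 0 = 1 := by
  simp [gbinom]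

@[simp]
lemma gbinom_one (a : ℂ) : gbinom a 1 = a := by
  simp [gbinom]

lemma RC_zero (l1 l2 : ℂ) (f g : ℂ[X]) : RC l1 l2 0 f g = f * g := by
  simp [RC]

lemma RC_one (l1 l2 : ℂ) (f g : ℂ[X]) :
    RC l1 l2 1 f g = l1 • (f * derivative g) - l2 • (derivative f * g) := by
  simp [RC, Finset.sum_range_succ, sub_eq_add_neg]

theorem rc_weighted_identity (l1 l2 l3 : ℂ) (f1 f2 f3 : Polynomial ℂ) :
    l3 • RC (l1 + l2 + 2) l3 0 (RC l1 l2 1 f1 f2) f3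
      + l1 • RC (l2 + l3 + 2) l1 0 (RC l2 l3 1 f2 f3) f1
      + l2 • RC (l3 + l1 + 2) l2 0 (RC l3 l1 1 f3 f1) f2 = 0 := by
  simp only [RC_zero, RC_one, Polynomial.smul_eq_C_mul]
  ring
end

section
/- For the second generating function of Racah polynomials: Σ_{k=0}^n [(-n)_k (λ2)_k / ((-λ3-n+1)_k k!)] R_{p,k} t^k = ₂F₁(-p, λ1+n-p; λ1+λ2+λ3+n-1; t) · ₂F₁(p-n, p+λ2; -λ3-n+1; t), for 0 ≤ p ≤ n and generic parameters λ1, λ2, λ3. -/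
open Finset

/-- Rising Pochhammer symbol `(x)_m`. -/
noncomputable def poch (x : ℂ) (m : ℕ) : ℂ := (ascPochhammer ℂ m).eval x

/-- Racah polynomial value
`R_{p,k} = ₄F₃(-p, p+λ2+λ3-1, -k, k+λ1+λ2-1; λ2, λ1+λ2+λ3+n-1, -n; 1)`,
a terminating sum. -/
noncomputable def Racah (l1 l2 l3 : ℂ) (n p k : ℕ) : ℂ :=
  ∑ j ∈ Finset.range (min p k + 1),
    poch (-(p : ℂ)) j * poch ((p : ℂ) + l2 + l3 - 1) j * poch (-(k : ℂ)) j *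
        poch ((k : ℂ) + l1 + l2 - 1) j /
      (poch l2 j * poch (l1 + l2 + l3 + (n : ℂ) - 1) j * poch (-(n : ℂ)) j *
        (j.factorial : ℂ))

/-- Terminating Gauss hypergeometric polynomial `₂F₁(-m, b; c; t)`. -/
noncomputable def F21 (m : ℕ) (b c t : ℂ) : ℂ :=
  ∑ j ∈ Finset.range (m + 1),
    poch (-(m : ℂ)) j * poch b j / (poch c j * (j.factorial : ℂ)) * t ^ j

/-!
Comparing coefficients of `t ^ k`, the identity says that
`(-n)_k (λ2)_k / ((1-λ3-n)_k k!) · R_{p,k}` is the Cauchy convolution of the coefficient sequences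
of the two `₂F₁`'s. Multiplied out, this is a transformation of the balanced terminating `₄F₃`
defining `R_{p,k}`. It is proved by expanding `(p+λ2+λ3-1)_j (k+λ1+λ2-1)_j` with the
Pfaff–Saalschütz summation, exchanging the two sums, and evaluating the inner sum by
Pfaff–Saalschütz once more; Pfaff–Saalschütz itself follows from two applications of
Chu–Vandermonde.
-/

lemma neg_one_pow_mul_neg_one_pow_self {R : Type*} [Monoid R] [HasDistribNeg R] (n : ℕ) :
    (-1 : R) ^ n * (-1) ^ n = 1 := by
  rw [← pow_add, Even.neg_one_pow ⟨n, rfl⟩]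

lemma sum_range_diag_flip' {M : Type*} [AddCommMonoid M] (n : ℕ) (f : ℕ → ℕ → M) :
    ∑ i ∈ range (n + 1), ∑ r ∈ range (n - i + 1), f i r =
      ∑ s ∈ range (n + 1), ∑ i ∈ range (s + 1), f i (s - i) := by
  rw [sum_range_diag_flip]
  refine sum_congr rfl fun i hi => ?_
  rw [Nat.sub_add_comm (mem_range_succ_iff.1 hi)]

lemma sum_range_mul_pow_eq_of_le {R : Type*} [CommSemiring R] {a : ℕ → R} {m N : ℕ}
    (ha : ∀ i, m < i → a i = 0) (hN : m ≤ N) (t : R) :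
    ∑ i ∈ range (m + 1), a i * t ^ i = ∑ i ∈ range (N + 1), a i * t ^ i :=
  sum_subset (range_subset_range.2 (by omega)) fun i _ hi => by
    rw [ha i (by simpa using hi), zero_mul]

lemma sum_mul_sum_eq_sum_convolution {R : Type*} [CommSemiring R] {a b : ℕ → R} {m n : ℕ}
    (ha : ∀ i, m < i → a i = 0) (hb : ∀ j, n < j → b j = 0) (t : R) :
    (∑ i ∈ range (m + 1), a i * t ^ i) * (∑ j ∈ range (n + 1), b j * t ^ j) =
      ∑ k ∈ range (m + n + 1), (∑ i ∈ range (k + 1), a i * b (k - i)) * t ^ k := by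
  rw [sum_range_mul_pow_eq_of_le ha (Nat.le_add_right m n),
    sum_range_mul_pow_eq_of_le hb (Nat.le_add_left n m), sum_mul_sum]
  trans ∑ i ∈ range (m + n + 1), ∑ j ∈ range (m + n - i + 1), a i * b j * t ^ (i + j)
  · refine sum_congr rfl fun i hi => (sum_subset (range_subset_range.2 (by omega)) ?_).symm.trans
      (sum_congr rfl fun j _ => by ring)
    intro j _ hj
    simp only [mem_range, not_lt] at hi hj
    rcases le_or_gt i m with him | him
    · rw [hb j (by omega)]; ring
    · rw [ha i him]; ring
  rw [sum_range_diag_flip']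
  refine sum_congr rfl fun k _ => ?_
  rw [sum_mul]
  refine sum_congr rfl fun i hi => ?_
  rw [Nat.add_sub_cancel' (mem_range_succ_iff.1 hi)]

@[simp] lemma poch_zero (x : ℂ) : poch x 0 = 1 := by simp [poch]

lemma poch_succ (x : ℂ) (m : ℕ) : poch x (m + 1) = poch x m * (x + m) :=
  ascPochhammer_succ_eval m x

lemma poch_add (x : ℂ) (a b : ℕ) : poch x (a + b) = poch x a * poch (x + a) b := by
  simp [poch, ← ascPochhammer_mul, Polynomial.eval_comp]

lemma poch_eq_mul_poch_sub {j k : ℕ} (x : ℂ) (h : j ≤ k) :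
    poch x k = poch x j * poch (x + j) (k - j) := by
  rw [← poch_add, Nat.add_sub_cancel' h]

lemma poch_neg_natCast (k j : ℕ) : poch (-k) j = (-1) ^ j * k.choose j * j.factorial := by
  rw [poch, ascPochhammer_eval_neg_eq_descPochhammer, descPochhammer_eval_eq_descFactorial,
    Nat.descFactorial_eq_factorial_mul_choose]
  push_cast; ring

lemma poch_neg_natCast_of_lt {k j : ℕ} (h : k < j) : poch (-k) j = 0 :=
  ascPochhammer_eval_neg_coe_nat_of_lt h

lemma poch_ne_zero_of_re {x : ℂ} {m : ℕ} (h : ∀ i < m, x.re + i ≠ 0) : poch x m ≠ 0 := by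
  intro h0
  obtain ⟨i, hi, hx⟩ := (ascPochhammer_eval_eq_zero_iff m x).1 h0
  exact h i hi (by linear_combination (by simpa using congrArg Complex.re hx : (i : ℝ) = -x.re))

lemma poch_ne_zero_of_le {x : ℂ} {j k : ℕ} (h : poch x k ≠ 0) (hjk : j ≤ k) :
    poch x j ≠ 0 :=
  left_ne_zero_of_mul (poch_eq_mul_poch_sub x hjk ▸ h)

lemma poch_neg_natCast_ne_zero {n j : ℕ} (h : j ≤ n) : poch (-(n : ℂ)) j ≠ 0 := by
  rw [poch_neg_natCast]
  exact mul_ne_zero (mul_ne_zero (pow_ne_zero _ (by norm_num))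
    (Nat.cast_ne_zero.2 (Nat.choose_pos h).ne')) (Nat.cast_ne_zero.2 j.factorial_ne_zero)

lemma poch_reflect {x y : ℂ} {m : ℕ} (h : x + y = 1 - m) : poch y m = (-1) ^ m * poch x m := by
  rw [poch, ← neg_neg y, ascPochhammer_eval_neg_eq_descPochhammer,
    descPochhammer_eval_eq_ascPochhammer, show -y - m + 1 = x by linear_combination -h]
  rfl

lemma poch_vandermonde (x y : ℂ) (m : ℕ) :
    poch (x + y) m = ∑ i ∈ range (m + 1), (m.choose i : ℂ) * poch x i * poch y (m - i) := by
  induction m with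
  | zero => simp
  | succ m ih =>
    simp only [mul_assoc]
    rw [sum_choose_succ_mul (fun i j => poch x i * poch y j), poch_succ, ih, sum_mul,
      ← sum_add_distrib]
    refine sum_congr rfl fun i hi => ?_
    have hi : i ≤ m := mem_range_succ_iff.1 hi
    rw [Nat.sub_add_comm hi, poch_succ, poch_succ]
    push_cast [Nat.cast_sub hi]
    ring

/-- Pfaff–Saalschütz: `₃F₂(-M, a, b; c, 1+a+b-c-M; 1) = (c-a)_M (c-b)_M / ((c)_M (c-a-b)_M)`,
multiplied out. -/
lemma poch_saalschutz (a b c : ℂ) (M : ℕ) :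
    ∑ i ∈ range (M + 1), (M.choose i : ℂ) * poch a i * poch b i * poch (c + i) (M - i) *
        poch (c - a - b) (M - i) =
      poch (c - a) M * poch (c - b) M := by
  set e := c - a - b
  let g : ℕ → ℕ → ℂ := fun i r => (M.choose i : ℂ) * (M - i).choose r * poch a (i + r) *
    poch b i * poch (c - a) (M - i - r) * poch e (M - i)
  have expand : ∀ i ∈ range (M + 1), (M.choose i : ℂ) * poch a i * poch b i *
      poch (c + i) (M - i) * poch e (M - i) = ∑ r ∈ range (M - i + 1), g i r := by
    intro i _
    rw [show c + i = (a + i) + (c - a) by ring, poch_vandermonde, mul_sum, sum_mul]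
    refine sum_congr rfl fun r _ => ?_
    simp only [g, poch_add]
    ring
  have collapse : ∀ s ∈ range (M + 1), ∑ i ∈ range (s + 1), g i (s - i) =
      M.choose s * poch a s * poch e (M - s) * poch (c - a) M := by
    intro s hs
    have hs : s ≤ M := mem_range_succ_iff.1 hs
    have term : ∀ i ∈ range (s + 1), g i (s - i) =
        M.choose s * poch a s * poch (c - a) (M - s) * poch e (M - s) *
          (s.choose i * poch b i * poch (e + (M - s : ℕ)) (s - i)) := by
      intro i hi
      have hi : i ≤ s := mem_range_succ_iff.1 hi
      have hchoose : (M.choose i * (M - i).choose (s - i) : ℂ) = M.choose s * s.choose i := by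
        exact_mod_cast (Nat.choose_mul hi).symm
      have he : poch e (M - i) = poch e (M - s) * poch (e + (M - s : ℕ)) (s - i) := by
        rw [← poch_add]; congr 1; omega
      simp only [g, Nat.add_sub_cancel' hi, show M - i - (s - i) = M - s by omega, he]
      linear_combination (poch a s * poch b i * poch (c - a) (M - s) * poch e (M - s) *
        poch (e + (M - s : ℕ)) (s - i)) * hchoose
    rw [sum_congr rfl term, ← mul_sum, ← poch_vandermonde,
      show b + (e + ((M - s : ℕ) : ℂ)) = c - a + (M - s : ℕ) by ring,
      poch_eq_mul_poch_sub (c - a) (Nat.sub_le M s), Nat.sub_sub_self hs]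
    ring
  rw [sum_congr rfl expand, sum_range_diag_flip', sum_congr rfl collapse, ← sum_mul,
    show c - b = a + e by ring, poch_vandermonde, mul_comm]

/-- `poch_saalschutz` read backwards (`i ↦ M - i`), with every Pochhammer symbol reflected. -/
lemma poch_saalschutz' (A B U V : ℂ) (M : ℕ) (h : U + V = A + B - M + 1) :
    ∑ r ∈ range (M + 1), (-1) ^ r * (M.choose r : ℂ) * poch A r * poch B r *
        poch (U + r) (M - r) * poch (V + r) (M - r) =
      (-1) ^ M * poch (U - A) M * poch (U - B) M := by
  have key := poch_saalschutz (1 - U - M) (1 - V - M) (1 - B - M) M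
  rw [← sum_range_reflect] at key
  simp only [Nat.add_sub_cancel] at key
  rw [show 1 - B - M - (1 - U - M) - (1 - V - M) = A by linear_combination h,
    show 1 - B - M - (1 - U - M) = U - B by ring,
    poch_reflect (x := U - A) (y := 1 - B - M - (1 - V - M)) (by linear_combination h)] at key
  rw [show (-1) ^ M * poch (U - A) M * poch (U - B) M =
    poch (U - B) M * ((-1) ^ M * poch (U - A) M) by ring, ← key]
  refine sum_congr rfl fun r hr => ?_
  have hr : r ≤ M := mem_range_succ_iff.1 hr
  rw [Nat.choose_symm hr, Nat.sub_sub_self hr,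
    poch_reflect (x := U + r) (y := 1 - U - M) (m := M - r) (by push_cast [Nat.cast_sub hr]; ring),
    poch_reflect (x := V + r) (y := 1 - V - M) (m := M - r) (by push_cast [Nat.cast_sub hr]; ring),
    poch_reflect (x := B) (y := 1 - B - M + (M - r : ℕ)) (m := r)
      (by push_cast [Nat.cast_sub hr]; ring)]
  linear_combination (-(-1) ^ r * (M.choose r : ℂ) * poch A r * poch B r * poch (U + r) (M - r) *
    poch (V + r) (M - r)) * neg_one_pow_mul_neg_one_pow_self (R := ℂ) (M - r)

section Balanced4F3

variable (m : ℕ) (x y u v w : ℂ)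

/-- The summand of the double sum obtained by expanding `(y)_j (u+v+w-x-y+m-1)_j` with
`poch_saalschutz`. -/
noncomputable def balanced4F3Term (j i : ℕ) : ℂ :=
  (-1) ^ j * (m.choose j : ℂ) * j.choose i * poch x j * poch (w - y) i *
    poch (x + y - u - v - m + 1) i * poch (w + i) (m - i) * poch (u + v - x + m - 1) (j - i) *
    poch (u + j) (m - j) * poch (v + j) (m - j)

lemma balanced4F3_summand_eq_sum {j : ℕ} (hj : j ≤ m) :
    (-1) ^ j * (m.choose j : ℂ) * poch x j * poch y j * poch (u + v + w - x - y + m - 1) j *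
        poch (u + j) (m - j) * poch (v + j) (m - j) * poch (w + j) (m - j) =
      ∑ i ∈ range (j + 1), balanced4F3Term m x y u v w j i := by
  have saal := poch_saalschutz (w - y) (x + y - u - v - m + 1) w j
  rw [show w - (w - y) - (x + y - u - v - m + 1) = u + v - x + m - 1 by ring,
    show w - (w - y) = y by ring,
    show w - (x + y - u - v - m + 1) = u + v + w - x - y + m - 1 by ring] at saal
  trans ((-1) ^ j * (m.choose j : ℂ) * poch x j * poch (u + j) (m - j) *
    poch (v + j) (m - j) * poch (w + j) (m - j)) * (poch y j * poch (u + v + w - x - y + m - 1) j)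
  · ring
  rw [← saal, mul_sum]
  refine sum_congr rfl fun i hi => ?_
  have hi : i ≤ j := mem_range_succ_iff.1 hi
  have hw : poch (w + i) (m - i) = poch (w + i) (j - i) * poch (w + j) (m - j) := by
    rw [poch_eq_mul_poch_sub (w + i) (show j - i ≤ m - i by omega),
      show m - i - (j - i) = m - j by omega, Nat.cast_sub hi, add_add_sub_cancel]
  rw [balanced4F3Term, hw]
  ring

lemma sum_balanced4F3Term {i : ℕ} (hi : i ≤ m) :
    ∑ r ∈ range (m - i + 1), balanced4F3Term m x y u v w (i + r) i =
      (m.choose i : ℂ) * poch x i * poch (w - y) i * poch (v - x) (m - i) *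
        poch (u - x) (m - i) * poch (w + i) (m - i) * poch (u + v - x - y + m - i) i := by
  set b := x + y - u - v - m + 1
  set e := u + v - x + m - 1
  have term : ∀ r ∈ range (m - i + 1), balanced4F3Term m x y u v w (i + r) i =
      (-1) ^ i * (m.choose i : ℂ) * poch x i * poch (w - y) i * poch b i * poch (w + i) (m - i) *
        ((-1) ^ r * ((m - i).choose r : ℂ) * poch (x + i) r * poch e r *
          poch (u + i + r) (m - i - r) * poch (v + i + r) (m - i - r)) := by
    intro r _
    have hchoose : (m.choose (i + r) * (i + r).choose i : ℂ) = m.choose i * (m - i).choose r := by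
      exact_mod_cast (Nat.choose_mul (Nat.le_add_right i r)).trans (by rw [Nat.add_sub_cancel_left])
    simp only [balanced4F3Term, Nat.add_sub_cancel_left, poch_add, pow_add, Nat.sub_sub,
      Nat.cast_add, add_assoc]
    linear_combination (-1) ^ i * (-1) ^ r * poch x i * poch (x + i) r * poch (w - y) i *
      poch b i * poch (w + i) (m - i) * poch e r * poch (u + (i + r)) (m - (i + r)) *
      poch (v + (i + r)) (m - (i + r)) * hchoose
  rw [sum_congr rfl term, ← mul_sum, poch_saalschutz' (x + i) e (u + i) (v + i) (m - i)
      (by push_cast [Nat.cast_sub hi]; ring),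
    poch_reflect (x := v - x) (y := u + i - e) (m := m - i) (by push_cast [Nat.cast_sub hi]; ring),
    poch_reflect (x := b) (y := u + v - x - y + m - i) (m := i) (by ring),
    show u + i - (x + i) = u - x by ring]
  linear_combination (m.choose i : ℂ) * poch x i * poch (w - y) i * poch (v - x) (m - i) *
    poch (u - x) (m - i) * poch (w + i) (m - i) * poch b i * (-1) ^ i *
    neg_one_pow_mul_neg_one_pow_self (R := ℂ) (m - i)

/-- A balanced terminating `₄F₃(-m, x, y, z; u, v, w; 1)`, `z = u+v+w-x-y+m-1`, as a convolution
of two terminating `₂F₁` coefficient sequences (all denominators multiplied out). -/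
lemma balanced4F3_eq_convolution :
    ∑ j ∈ range (m + 1), (-1) ^ j * (m.choose j : ℂ) * poch x j * poch y j *
        poch (u + v + w - x - y + m - 1) j * poch (u + j) (m - j) * poch (v + j) (m - j) *
        poch (w + j) (m - j) =
      ∑ i ∈ range (m + 1), (m.choose i : ℂ) * poch x i * poch (w - y) i *
        poch (v - x) (m - i) * poch (u - x) (m - i) * poch (w + i) (m - i) *
        poch (u + v - x - y + m - i) i := by
  rw [sum_congr rfl fun j hj =>
      balanced4F3_summand_eq_sum m x y u v w (mem_range_succ_iff.1 hj),
    ← sum_congr rfl fun i hi => sum_balanced4F3Term m x y u v w (mem_range_succ_iff.1 hi),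
    sum_range_diag_flip']
  refine sum_congr rfl fun j _ => sum_congr rfl fun i hi => ?_
  rw [Nat.add_sub_cancel' (mem_range_succ_iff.1 hi)]

end Balanced4F3

noncomputable def F21Coeff (m : ℕ) (b c : ℂ) (j : ℕ) : ℂ :=
  poch (-(m : ℂ)) j * poch b j / (poch c j * (j.factorial : ℂ))

lemma F21_eq_sum (m : ℕ) (b c t : ℂ) :
    F21 m b c t = ∑ j ∈ range (m + 1), F21Coeff m b c j * t ^ j := rfl

lemma F21Coeff_eq_zero {m j : ℕ} (b c : ℂ) (h : m < j) : F21Coeff m b c j = 0 := by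
  simp [F21Coeff, poch_neg_natCast_of_lt h]

lemma poch_mul_racah (l1 l2 l3 : ℂ) {n p k : ℕ} (hk : k ≤ n) (h2 : poch l2 k ≠ 0)
    (hS : poch (l1 + l2 + l3 + n - 1) k ≠ 0) :
    poch (-(n : ℂ)) k * poch l2 k * poch (l1 + l2 + l3 + n - 1) k * Racah l1 l2 l3 n p k =
      ∑ j ∈ range (k + 1), (-1) ^ j * (k.choose j : ℂ) * poch (-(p : ℂ)) j *
        poch (p + l2 + l3 - 1) j * poch (k + l1 + l2 - 1) j * poch (l2 + j) (k - j) *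
        poch (-(n : ℂ) + j) (k - j) * poch (l1 + l2 + l3 + n - 1 + j) (k - j) := by
  rw [Racah, sum_subset (range_subset_range.2 (show min p k + 1 ≤ k + 1 by omega)), mul_sum]
  · refine sum_congr rfl fun j hj => ?_
    have hjk : j ≤ k := mem_range_succ_iff.1 hj
    have := poch_ne_zero_of_le h2 hjk
    have := poch_ne_zero_of_le hS hjk
    have := poch_neg_natCast_ne_zero (hjk.trans hk)
    have : (j.factorial : ℂ) ≠ 0 := Nat.cast_ne_zero.2 j.factorial_ne_zero
    rw [poch_eq_mul_poch_sub l2 hjk, poch_eq_mul_poch_sub (-(n : ℂ)) hjk,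
      poch_eq_mul_poch_sub _ hjk, poch_neg_natCast k j]
    field_simp
  · intro j hjk hj
    rw [poch_neg_natCast_of_lt (show p < j by simp only [mem_range, not_lt] at hjk hj; omega)]
    simp

lemma sum_F21Coeff_mul_F21Coeff_mul (m m' : ℕ) (b b' c c' : ℂ) {k : ℕ} (hc : poch c k ≠ 0)
    (hc' : poch c' k ≠ 0) :
    (∑ j ∈ range (k + 1), F21Coeff m b c j * F21Coeff m' b' c' (k - j)) *
        (poch c k * poch c' k * k.factorial) =
      ∑ j ∈ range (k + 1), (k.choose j : ℂ) * poch (-(m : ℂ)) j * poch b j *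
        poch (-(m' : ℂ)) (k - j) * poch b' (k - j) * poch (c + j) (k - j) *
        poch (c' + k - j) j := by
  rw [sum_mul]
  refine sum_congr rfl fun j hj => ?_
  have hjk : j ≤ k := mem_range_succ_iff.1 hj
  have := poch_ne_zero_of_le hc hjk
  have := poch_ne_zero_of_le hc' (Nat.sub_le k j)
  have : (j.factorial : ℂ) ≠ 0 := Nat.cast_ne_zero.2 j.factorial_ne_zero
  have : ((k - j).factorial : ℂ) ≠ 0 := Nat.cast_ne_zero.2 (k - j).factorial_ne_zero
  have hfact : (k.factorial : ℂ) = k.choose j * j.factorial * (k - j).factorial := by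
    exact_mod_cast (Nat.choose_mul_factorial_mul_factorial hjk).symm
  rw [F21Coeff, F21Coeff, hfact, poch_eq_mul_poch_sub c hjk,
    poch_eq_mul_poch_sub c' (Nat.sub_le k j), Nat.sub_sub_self hjk, Nat.cast_sub hjk, add_sub_assoc]
  field_simp

lemma racah_coeff_eq_sum_F21Coeff (l1 l2 l3 : ℂ) {n p k : ℕ} (hp : p ≤ n) (hk : k ≤ n)
    (h2 : poch l2 k ≠ 0) (hS : poch (l1 + l2 + l3 + n - 1) k ≠ 0)
    (hc : poch (-l3 - n + 1) k ≠ 0) :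
    poch (-(n : ℂ)) k * poch l2 k / (poch (-l3 - n + 1) k * k.factorial) * Racah l1 l2 l3 n p k =
      ∑ j ∈ range (k + 1), F21Coeff p (l1 + n - p) (l1 + l2 + l3 + n - 1) j *
        F21Coeff (n - p) (p + l2) (-l3 - n + 1) (k - j) := by
  have W := balanced4F3_eq_convolution k (-p) (p + l2 + l3 - 1) l2 (-n) (l1 + l2 + l3 + n - 1)
  rw [show l2 + -(n : ℂ) + (l1 + l2 + l3 + n - 1) - -(p : ℂ) - (p + l2 + l3 - 1) + k - 1 =
      k + l1 + l2 - 1 by ring,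
    show l1 + l2 + l3 + n - 1 - (p + l2 + l3 - 1) = l1 + n - p by ring,
    show -(n : ℂ) - -(p : ℂ) = -((n - p : ℕ) : ℂ) by push_cast [Nat.cast_sub hp]; ring,
    show l2 - -(p : ℂ) = p + l2 by ring,
    show l2 + -(n : ℂ) - -(p : ℂ) - (p + l2 + l3 - 1) + k = -l3 - n + 1 + k by ring] at W
  have hfact : (k.factorial : ℂ) ≠ 0 := Nat.cast_ne_zero.2 k.factorial_ne_zero
  apply mul_right_cancel₀ (mul_ne_zero (mul_ne_zero hS hc) hfact)
  rw [sum_F21Coeff_mul_F21Coeff_mul _ _ _ _ _ _ hS hc, ← W, ← poch_mul_racah l1 l2 l3 hk h2 hS]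
  field_simp

theorem racah_generating_function_of_ne_zero (l1 l2 l3 : ℂ) {n p : ℕ} (hp : p ≤ n) (t : ℂ)
    (h2 : poch l2 n ≠ 0) (hS : poch (l1 + l2 + l3 + n - 1) n ≠ 0)
    (hc : poch (-l3 - n + 1) n ≠ 0) :
    ∑ k ∈ range (n + 1),
        poch (-(n : ℂ)) k * poch l2 k / (poch (-l3 - n + 1) k * k.factorial) *
        Racah l1 l2 l3 n p k * t ^ k =
      F21 p (l1 + n - p) (l1 + l2 + l3 + n - 1) t * F21 (n - p) (p + l2) (-l3 - n + 1) t := by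
  rw [F21_eq_sum, F21_eq_sum, sum_mul_sum_eq_sum_convolution (fun j => F21Coeff_eq_zero _ _)
    (fun j => F21Coeff_eq_zero _ _), Nat.add_sub_cancel' hp]
  refine sum_congr rfl fun k hk => ?_
  have hk : k ≤ n := mem_range_succ_iff.1 hk
  rw [racah_coeff_eq_sum_F21Coeff l1 l2 l3 hp hk (poch_ne_zero_of_le h2 hk)
    (poch_ne_zero_of_le hS hk) (poch_ne_zero_of_le hc hk)]

/-- The second generating function for Racah polynomials. -/
theorem racah_generating_function (l1 l2 l3 : ℝ) (h1 : 0 < l1) (h2 : 0 < l2) (h3 : 0 < l3)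
    (n p : ℕ) (hp : p ≤ n) (t : ℂ) :
    ∑ k ∈ Finset.range (n + 1),
        poch (-(n : ℂ)) k * poch (l2 : ℂ) k / (poch (-(l3 : ℂ) - n + 1) k * (k.factorial : ℂ)) *
          Racah (l1 : ℂ) (l2 : ℂ) (l3 : ℂ) n p k * t ^ k
      = F21 p ((l1 : ℂ) + n - p) ((l1 : ℂ) + l2 + l3 + n - 1) t *
          F21 (n - p) ((p : ℂ) + l2) (-(l3 : ℂ) - n + 1) t := by
  have hn : ∀ i < n, (i : ℝ) + 1 ≤ n := fun i hi => by exact_mod_cast hi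
  apply racah_generating_function_of_ne_zero _ _ _ hp t <;>
    refine poch_ne_zero_of_re fun i hi => ?_ <;>
    simp only [Complex.add_re, Complex.sub_re, Complex.neg_re, Complex.ofReal_re,
      Complex.natCast_re, Complex.one_re]
  · positivity
  · exact (by linarith [hn i hi] : (0 : ℝ) < _).ne'
  · exact (by linarith [hn i hi] : _ < (0 : ℝ)).ne
end
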